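/- arXiv:1601.06390 — 2 statements merged into one kernel-verified Lean document; each statement's English description precedes it below -/
import Mathlib

section
/- Let u ∈ 𝒜_n^* and i ∈ {1,...,n−1}. If e_i(u) is defined, then std(e_i(u)) = std(u); if f_i(u) is defined, then std(f_i(u)) = std(u). -/
/-!
Common setup: words over the alphabet `𝒜_n = {1,…,n}` (modelled as `List ℕ`),
quasi-Kashiwara operators, the quasi-crystal graph, Kashiwara operators,
quasi-ribbon words, and the hypoplactic congruence.
-/

namespace HypoCrystal

noncomputable section
open scoped Classical

/-- `u` is a word over the alphabet `𝒜_n = {1,…,n}`. -/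
def IsWord (n : ℕ) (u : List ℕ) : Prop := ∀ a ∈ u, 1 ≤ a ∧ a ≤ n

/-- `u` has an `i`-inversion: some letter `i+1` occurs strictly to the left of some letter `i`. -/
def HasInv (i : ℕ) (u : List ℕ) : Prop :=
  ∃ v w x : List ℕ, u = v ++ (i + 1) :: w ++ i :: x

/-- Replace the first (leftmost) occurrence of `a` by `b`, if any; otherwise `none`. -/
def replaceFirst (a b : ℕ) : List ℕ → Option (List ℕ)
  | [] => none
  | x :: xs => if x = a then some (b :: xs) else (replaceFirst a b xs).map (x :: ·)

/-- The quasi-Kashiwara raising operator `e_i` (partial map, `none` = undefined):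
if `u` has an `i`-inversion it is undefined; otherwise it replaces the leftmost
letter `i+1` by `i` (undefined if there is no letter `i+1`). -/
def qe (i : ℕ) (u : List ℕ) : Option (List ℕ) :=
  if HasInv i u then none else replaceFirst (i + 1) i u

/-- The quasi-Kashiwara lowering operator `f_i` (partial map, `none` = undefined):
if `u` has an `i`-inversion it is undefined; otherwise it replaces the rightmost
letter `i` by `i+1` (undefined if there is no letter `i`). -/
def qf (i : ℕ) (u : List ℕ) : Option (List ℕ) :=
  if HasInv i u then none else (replaceFirst i (i + 1) u.reverse).map List.reverse

/-- Weight of a word: `wt u a` is the number of occurrences of the letter `a` in `u`. -/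
def wt (u : List ℕ) : ℕ → ℕ := fun a => u.count a

/-- There is an edge labelled `i` from `u` to `v` in the quasi-crystal graph `Γ(hypo_n)`. -/
def Edge (n i : ℕ) (u v : List ℕ) : Prop := 1 ≤ i ∧ i < n ∧ qf i u = some v

/-- `u` and `v` are adjacent (in the underlying undirected graph) in `Γ(hypo_n)`. -/
def Adj (n : ℕ) (u v : List ℕ) : Prop := ∃ i, Edge n i u v ∨ Edge n i v u

/-- `v` lies in the connected component `Γ(hypo_n, u)` of `u` in the quasi-crystal graph. -/
def SameComp (n : ℕ) : List ℕ → List ℕ → Prop := Relation.ReflTransGen (Adj n)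

/-- `u` is a highest-weight word: no raising operator `e_i` is defined on `u`. -/
def HighestWeight (n : ℕ) (u : List ℕ) : Prop := ∀ i, 1 ≤ i → i < n → qe i u = none

/-- `θ` is a quasi-crystal isomorphism from the component of `u` onto the component of `v`:
a weight-preserving bijection preserving labelled edges in both directions. -/
def IsQCIso (n : ℕ) (u v : List ℕ) (θ : List ℕ → List ℕ) : Prop :=
  Set.BijOn θ {x | SameComp n u x} {y | SameComp n v y} ∧
  (∀ x, SameComp n u x → wt (θ x) = wt x) ∧
  (∀ x y, SameComp n u x → SameComp n u y → ∀ i, (Edge n i x y ↔ Edge n i (θ x) (θ y)))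

/-- `u ∼ v`: there is a quasi-crystal isomorphism between the components of `u` and `v`
taking `u` to `v`. -/
def Sim (n : ℕ) (u v : List ℕ) : Prop :=
  ∃ θ : List ℕ → List ℕ, IsQCIso n u v θ ∧ θ u = v

/-- The standardization of `u`: position `k` receives the rank (starting at 1) of the
pair `(u_k, k)` among all pairs `(u_l, l)` ordered lexicographically. -/
def std (u : List ℕ) : List ℕ :=
  (List.range u.length).map fun k =>
    1 + ((List.range u.length).filter fun l =>
      u.getD l 0 < u.getD k 0 ∨ (u.getD l 0 = u.getD k 0 ∧ l < k)).length

/-- The maximal strictly decreasing factors of a word (the columns of its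
quasi-ribbon tabloid, each read bottom-to-top). -/
def decFactors : List ℕ → List (List ℕ)
  | [] => []
  | a :: rest =>
    match decFactors rest with
    | (b :: f) :: fs => if b < a then (a :: b :: f) :: fs else [a] :: (b :: f) :: fs
    | l => [a] :: l

/-- `w` is a quasi-ribbon word: its quasi-ribbon tabloid is a quasi-ribbon tableau,
i.e. the bottom entry of each column is ≤ the top entry of the next column. -/
def IsQRWord (w : List ℕ) : Prop :=
  (decFactors w).Chain' fun c d => c.headD 0 ≤ d.getLastD 0

/-- Row lengths (top to bottom) of the ribbon diagram whose column heights
(left to right) are given. -/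
def rowLengths : List ℕ → List ℕ
  | [] => []
  | [d] => List.replicate d 1
  | d :: e :: rest =>
    List.replicate (d - 1) 1 ++
      (match rowLengths (e :: rest) with
       | [] => [1]
       | r :: rs => (r + 1) :: rs)

/-- The shape (as a composition, listed top row first) of the quasi-ribbon tabloid of `w`. -/
def shape (w : List ℕ) : List ℕ := rowLengths ((decFactors w).map List.length)

/-- Columns of the quasi-ribbon tableau of shape `α` whose `j`-th row consists
entirely of symbols `j`, where rows are labelled starting from `j₀`. -/
def hwCols : List ℕ → ℕ → List (List ℕ)
  | [], _ => []
  | [a], j => List.replicate a [j]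
  | a :: b :: rest, j =>
    List.replicate (a - 1) [j] ++
      (match hwCols (b :: rest) (j + 1) with
       | [] => [[j]]
       | c :: cs => (c ++ [j]) :: cs)

/-- The column reading of the quasi-ribbon tableau of shape `α` whose `j`-th row
consists entirely of symbols `j`. -/
def hwQR (α : List ℕ) : List ℕ := (hwCols α 1).flatten

/-- The defining relations `R_hypo` of the hypoplactic monoid of rank `n`. -/
inductive HypoRel (n : ℕ) : List ℕ → List ℕ → Prop
  | knuth1 {a b c : ℕ} : 1 ≤ a → a ≤ b → b < c → c ≤ n → HypoRel n [a, c, b] [c, a, b]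
  | knuth2 {a b c : ℕ} : 1 ≤ a → a < b → b ≤ c → c ≤ n → HypoRel n [b, a, c] [b, c, a]
  | quasi1 {a b c d : ℕ} : 1 ≤ a → a ≤ b → b < c → c ≤ d → d ≤ n →
      HypoRel n [c, a, d, b] [a, c, b, d]
  | quasi2 {a b c d : ℕ} : 1 ≤ a → a < b → b ≤ c → c < d → d ≤ n →
      HypoRel n [b, d, a, c] [d, b, c, a]

/-- The hypoplactic congruence `≡_hypo`: the congruence on the free monoid generated
by the relations `R_hypo`. -/
inductive HypoCong (n : ℕ) : List ℕ → List ℕ → Prop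
  | of {u v} : HypoRel n u v → HypoCong n u v
  | refl (u) : HypoCong n u u
  | symm {u v} : HypoCong n u v → HypoCong n v u
  | trans {u v w} : HypoCong n u v → HypoCong n v w → HypoCong n u w
  | append {u v u' v'} : HypoCong n u v → HypoCong n u' v' →
      HypoCong n (u ++ u') (v ++ v')

/-- The signature word of `u` for index `i`: each letter `i` becomes `(position, true)`
(that is, `+`) and each letter `i+1` becomes `(position, false)` (that is, `−`). -/
def signWord (i : ℕ) (u : List ℕ) : List (ℕ × Bool) :=
  ((List.range u.length).zip u).filterMap fun pa =>
    if pa.2 = i then some (pa.1, true)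
    else if pa.2 = i + 1 then some (pa.1, false) else none

/-- Iteratively delete factors `−+` from a signature word, producing the reduced
word `+^p −^q`. -/
def reduce : List (ℕ × Bool) → List (ℕ × Bool)
  | [] => []
  | x :: rest =>
    match reduce rest with
    | y :: rest' => if x.2 = false ∧ y.2 = true then rest' else x :: y :: rest'
    | [] => [x]

/-- The Kashiwara raising operator `ẽ_i`, computed by the signature rule: change to `i`
the letter `i+1` corresponding to the leftmost `−` of the reduced signature word. -/
def KE (i : ℕ) (u : List ℕ) : Option (List ℕ) :=
  (((reduce (signWord i u)).filter fun x => !x.2).head?).map fun x => u.set x.1 i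

/-- The Kashiwara lowering operator `f̃_i`, computed by the signature rule: change to `i+1`
the letter `i` corresponding to the rightmost `+` of the reduced signature word. -/
def KF (i : ℕ) (u : List ℕ) : Option (List ℕ) :=
  (((reduce (signWord i u)).filter fun x => x.2).getLast?).map fun x => u.set x.1 (i + 1)

/-- The Schützenberger involution on `𝒜_n^*`: reverse the word and replace each
letter `a` by `n − a + 1`. -/
def sharp (n : ℕ) (u : List ℕ) : List ℕ := u.reverse.map fun a => n + 1 - a

/-- The largest letter occurring in `u` (0 for the empty word). -/
def maxLetter (u : List ℕ) : ℕ := u.foldr max 0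

/-- `β` is coarser than `α` (`β ⪯ α`): they have the same weight and every proper
partial sum of `β` is a proper partial sum of `α`. -/
def Coarser (β α : List ℕ) : Prop :=
  β.sum = α.sum ∧ ∀ p < β.length, ∃ m < α.length, (β.take p).sum = (α.take m).sum

end
end HypoCrystal

/-!
Both `e_i` and `f_i` turn a word `l₁ ++ (i+1) :: l₂` into `l₁ ++ i :: l₂` or back. When `u`
has no `i`-inversion and the changed letter is the leftmost `i+1` (resp. the rightmost `i`),
`l₁` contains no `i+1` and `l₂` no `i`; then no key `(c, k)` lies strictly between
`(i, |l₁|)` and `(i+1, |l₁|)` in the lexicographic order, so all ranks are unchanged.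
-/

namespace HypoCrystal

theorem exists_of_replaceFirst_eq_some {a b : ℕ} {u v : List ℕ}
    (h : replaceFirst a b u = some v) :
    ∃ l₁ l₂, a ∉ l₁ ∧ u = l₁ ++ a :: l₂ ∧ v = l₁ ++ b :: l₂ := by
  induction u generalizing v with
  | nil => simp [replaceFirst] at h
  | cons x xs ih =>
    by_cases hx : x = a
    · subst hx
      simp only [replaceFirst, if_true, Option.some.injEq] at h
      exact ⟨[], xs, List.not_mem_nil, rfl, h.symm⟩
    · simp only [replaceFirst, hx, if_false, Option.map_eq_some_iff] at h
      obtain ⟨w, hw, rfl⟩ := h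
      obtain ⟨l₁, l₂, ha, rfl, rfl⟩ := ih hw
      exact ⟨x :: l₁, l₂, by simp [Ne.symm hx, ha], rfl, rfl⟩

theorem hasInv_append {i : ℕ} {l₁ l₂ : List ℕ} (h₁ : i + 1 ∈ l₁) (h₂ : i ∈ l₂) :
    HasInv i (l₁ ++ l₂) := by
  obtain ⟨s, t, rfl⟩ := List.append_of_mem h₁
  obtain ⟨s', t', rfl⟩ := List.append_of_mem h₂
  exact ⟨s, t ++ s', t', by simp⟩

theorem getD_append_cons {α : Type*} (l₁ l₂ : List α) (x d : α) (m : ℕ) :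
    (l₁ ++ x :: l₂).getD m d =
      if m < l₁.length then l₁.getD m d
      else if m = l₁.length then x else l₂.getD (m - l₁.length - 1) d := by
  grind

theorem std_eq_of_lex_iff {u v : List ℕ} (hlen : v.length = u.length)
    (h : ∀ l k, l < u.length → k < u.length →
      ((v.getD l 0 < v.getD k 0 ∨ (v.getD l 0 = v.getD k 0 ∧ l < k)) ↔
       (u.getD l 0 < u.getD k 0 ∨ (u.getD l 0 = u.getD k 0 ∧ l < k)))) :
    std v = std u := by
  unfold std
  rw [hlen]
  refine List.map_congr_left fun k hk => ?_
  congr 2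
  refine List.filter_congr fun l hl => ?_
  exact decide_eq_decide.mpr (h l k (List.mem_range.mp hl) (List.mem_range.mp hk))

theorem std_append_cons_succ {l₁ l₂ : List ℕ} {i : ℕ} (h₁ : i + 1 ∉ l₁) (h₂ : i ∉ l₂) :
    std (l₁ ++ i :: l₂) = std (l₁ ++ (i + 1) :: l₂) := by
  have left (m : ℕ) (hm : m < l₁.length) : l₁.getD m 0 ≠ i + 1 := fun h =>
    h₁ (h ▸ List.getD_eq_getElem l₁ 0 hm ▸ List.getElem_mem hm)
  have right (m : ℕ) (hm : m < l₂.length) : l₂.getD m 0 ≠ i := fun h =>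
    h₂ (h ▸ List.getD_eq_getElem l₂ 0 hm ▸ List.getElem_mem hm)
  refine std_eq_of_lex_iff (by simp) fun l k hl hk => ?_
  simp only [List.length_append, List.length_cons] at hl hk
  have hl₁ := left l
  have hk₁ := left k
  have hl₂ := right (l - l₁.length - 1)
  have hk₂ := right (k - l₁.length - 1)
  simp only [getD_append_cons]
  split_ifs <;> omega

theorem qe_qf_preserve_standardization_general (u : List ℕ) (i : ℕ) :
    (∀ v, qe i u = some v → std v = std u) ∧
    (∀ v, qf i u = some v → std v = std u) := by
  refine ⟨fun v hv => ?_, fun v hv => ?_⟩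
  · rw [qe] at hv
    split_ifs at hv with hinv
    obtain ⟨l₁, l₂, h₁, rfl, rfl⟩ := exists_of_replaceFirst_eq_some hv
    refine std_append_cons_succ h₁ fun h₂ => hinv ?_
    simpa using hasInv_append (l₁ := l₁ ++ [i + 1]) (by simp) h₂
  · rw [qf] at hv
    split_ifs at hv with hinv
    obtain ⟨w, hw, rfl⟩ := Option.map_eq_some_iff.mp hv
    obtain ⟨l₁, l₂, h₁, hu, rfl⟩ := exists_of_replaceFirst_eq_some hw
    rw [← List.reverse_reverse u, hu] at hinv ⊢
    simp only [List.reverse_append, List.reverse_cons, List.append_assoc,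
      List.singleton_append] at hinv ⊢
    refine (std_append_cons_succ (fun h₂ => hinv ?_) (by simpa using h₁)).symm
    simpa using hasInv_append (l₂ := i :: l₁.reverse) h₂ (by simp)

/-- Let `u ∈ 𝒜_n^*` and `i ∈ {1,…,n−1}`. If `e_i(u)` is defined, then
`std(e_i(u)) = std(u)`; if `f_i(u)` is defined, then `std(f_i(u)) = std(u)`. -/
theorem qe_qf_preserve_standardization (n : ℕ) (u : List ℕ) (hu : IsWord n u)
    (i : ℕ) (hi1 : 1 ≤ i) (hi2 : i < n) :
    (∀ v, qe i u = some v → std v = std u) ∧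
    (∀ v, qf i u = some v → std v = std u) :=
  qe_qf_preserve_standardization_general u i

end HypoCrystal
end

section
/- Let α be a composition and let w ∈ 𝒜_n^* be a quasi-ribbon word of shape α. Then w is a highest-weight word if and only if wt(w) = α, i.e., |w|_j = α_j for j = 1,...,ℓ(α) and |w|_j = 0 for j > ℓ(α). -/
/-!
A quasi-ribbon word is the concatenation of its columns, each read bottom to top; every entry of
a column is at most every entry of a later column. So the word has an `i`-inversion exactly when
some column contains both `i + 1` and `i`, and it is highest-weight exactly when every letter
`a > 1` shares a column with `a - 1`. This forces the first column to be `1, …, d₁` and each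
further column to be an interval starting at the last entry of the previous one: the tableau
whose `j`-th row is filled with `j`, whose weight is its shape. Conversely, a weight equal to the
shape fixes the columns one at a time to be these intervals.
-/

namespace List

theorem SortedGT.pair_sublist_iff {α : Type*} [PartialOrder α] {c : List α} (hc : c.SortedGT)
    {a b : α} (hab : b < a) : [a, b] <+ c ↔ a ∈ c ∧ b ∈ c := by
  refine ⟨fun h => ⟨h.subset (by simp), h.subset (by simp)⟩, fun ⟨ha, hb⟩ => ?_⟩
  refine sublist_of_subperm_of_sortedGE (Nodup.subperm (by simp [hab.ne']) ?_) ?_ hc.sortedGE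
  · simp [ha, hb, subset_def]
  · exact (pairwise_pair.mpr hab : [a, b].Pairwise (· > ·)).sortedGT.sortedGE

theorem SortedGT.eq_reverse_range' {c : List ℕ} {r : ℕ} (hc : c.SortedGT)
    (h : ∀ x ∈ c, r ≤ x ∧ x < r + c.length) : c = (range' r c.length).reverse := by
  have hsorted : (range' r c.length).reverse.SortedGE := by
    simpa using (pairwise_lt_range' (s := r) (n := c.length)).sortedLT.sortedLE
  refine Perm.eq_of_sortedGE hc.sortedGE hsorted ?_
  refine (hc.nodup.subperm fun x hx => ?_).perm_of_length_le (by simp)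
  simpa using h x hx

theorem lt_add_length_of_pred_mem {c : List ℕ} {r x : ℕ} (hrx : r ≤ x) (hx : x ∈ c)
    (hpred : ∀ i, r ≤ i → i + 1 ∈ c → i ∈ c) : x < r + c.length := by
  have hdown : ∀ m y, r ≤ y → y + m ∈ c → y ∈ c := by
    intro m
    induction m with
    | zero => exact fun y _ hy => hy
    | succ m ihm =>
      exact fun y hry hy => hpred y hry (ihm (y + 1) (by omega) (by rwa [add_right_comm]))
  have : (range' r (x + 1 - r)).length ≤ c.length :=
    ((nodup_range' (s := r) (n := x + 1 - r)).subperm fun y hy => by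
      simp only [mem_range'_1] at hy
      exact hdown (x - y) y hy.1 (by rwa [Nat.add_sub_cancel' (by omega : y ≤ x)])).length_le
  rw [length_range'] at this
  omega

theorem count_add_reverse_range' (r n k : ℕ) :
    ((range' r n).reverse).count (r + k) = if k < n then 1 else 0 := by
  rw [count_reverse, (nodup_range' (s := r) (n := n)).count]
  simp only [mem_range'_1]
  split_ifs <;> omega

end List

namespace HypoCrystal

open List

theorem hasInv_iff_sublist {i : ℕ} {u : List ℕ} : HasInv i u ↔ [i + 1, i] <+ u := by
  constructor
  · rintro ⟨v, w, x, rfl⟩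
    simp
  · intro h
    obtain ⟨r₁, r₂, rfl, h₁, h₂⟩ := cons_sublist_iff.mp h
    obtain ⟨v, w, rfl⟩ := append_of_mem h₁
    obtain ⟨w', x, rfl⟩ := append_of_mem (singleton_sublist.mp h₂)
    exact ⟨v, w ++ w', x, by simp⟩

theorem replaceFirst_eq_none_iff {a b : ℕ} {u : List ℕ} :
    replaceFirst a b u = none ↔ a ∉ u := by
  induction u with
  | nil => simp [replaceFirst]
  | cons x xs ih =>
    by_cases h : x = a
    · simp [replaceFirst, h]
    · simp [replaceFirst, h, ih, Ne.symm h]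

theorem qe_eq_none_iff {i : ℕ} {u : List ℕ} : qe i u = none ↔ HasInv i u ∨ i + 1 ∉ u := by
  unfold qe
  split_ifs with h <;> simp [h, replaceFirst_eq_none_iff]

theorem highestWeight_iff_of_isWord {n : ℕ} {u : List ℕ} (hu : IsWord n u) :
    HighestWeight n u ↔ ∀ i, 1 ≤ i → i + 1 ∈ u → [i + 1, i] <+ u := by
  simp only [HighestWeight, qe_eq_none_iff, hasInv_iff_sublist, or_iff_not_imp_right, not_not]
  refine ⟨fun h i hi hmem => h i hi ?_ hmem, fun h i hi _ => h i hi⟩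
  have := (hu _ hmem).2
  omega

theorem flatten_decFactors (w : List ℕ) : (decFactors w).flatten = w := by
  fun_induction decFactors w <;> simp_all

theorem ne_nil_and_sortedGT_of_mem_decFactors (w : List ℕ) :
    ∀ c ∈ decFactors w, c ≠ [] ∧ c.SortedGT := by
  fun_induction decFactors w <;> simp_all [sortedGT_iff_isChain]

theorem rowLengths_succ_cons_getD (d : ℕ) (l : List ℕ) (k : ℕ) :
    (rowLengths ((d + 1) :: l)).getD k 0 =
      if k < d then 1
      else if k = d then (rowLengths l).getD 0 0 + 1
      else (rowLengths l).getD (k - d) 0 := by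
  have key : rowLengths ((d + 1) :: l) =
      replicate d 1 ++ ((rowLengths l).headD 0 + 1) :: (rowLengths l).tail := by
    rcases l with _ | ⟨e, l⟩
    · simp [rowLengths, replicate_succ']
    · simp only [rowLengths, Nat.add_sub_cancel]
      split <;> simp_all
  rw [key]
  split_ifs with h₁ h₂
  · rw [getD_append _ _ _ _ (by simpa using h₁), getD_replicate 1 h₁]
  · subst h₂
    rw [getD_append_right _ _ _ _ (by simp)]
    cases rowLengths l <;> simp
  · obtain ⟨m, rfl⟩ : ∃ m, k = d + m + 1 := ⟨k - d - 1, by omega⟩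
    rw [getD_append_right _ _ _ _ (by simp; omega)]
    cases rowLengths l <;> simp [show d + m + 1 - d = m + 1 by omega]

theorem rowLengths_cons_getD_zero_pos {e : ℕ} (he : 0 < e) (l : List ℕ) :
    0 < (rowLengths (e :: l)).getD 0 0 := by
  obtain ⟨d, rfl⟩ := Nat.exists_eq_add_of_lt he
  rw [zero_add, rowLengths_succ_cons_getD]
  split_ifs <;> omega

/-- `cols` lists the columns, each read bottom to top, of the quasi-ribbon tableau whose rows
are filled, from top to bottom, with `r, r + 1, …`. -/
def IsHWColumns : List (List ℕ) → ℕ → Prop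
  | [], _ => True
  | c :: cs, r => ∃ d, c = (range' r (d + 1)).reverse ∧ IsHWColumns cs (r + d)

namespace IsHWColumns

theorem le_of_mem : ∀ {cols : List (List ℕ)} {r x : ℕ},
    IsHWColumns cols r → x ∈ cols.flatten → r ≤ x
  | [], _, _, _, hx => by simp at hx
  | _ :: _, _, _, ⟨_, rfl, hcs⟩, hx => by
    rcases mem_append.mp hx with hx | hx
    · simp at hx; omega
    · have := hcs.le_of_mem hx; omega

theorem exists_mem_mem : ∀ {cols : List (List ℕ)} {r : ℕ}, IsHWColumns cols r →
    ∀ i, r ≤ i → i + 1 ∈ cols.flatten → ∃ c ∈ cols, i + 1 ∈ c ∧ i ∈ c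
  | [], _, _, _, _, hi => by simp at hi
  | _ :: _, r, ⟨d, rfl, hcs⟩, i, hri, hi => by
    by_cases hid : i < r + d
    · exact ⟨_, mem_cons_self, by simp; omega, by simp; omega⟩
    · rcases mem_append.mp hi with hi | hi
      · simp at hi; omega
      · obtain ⟨c, hc, h⟩ := hcs.exists_mem_mem i (by omega) hi
        exact ⟨c, mem_cons_of_mem _ hc, h⟩

theorem count_add : ∀ {cols : List (List ℕ)} {r : ℕ}, IsHWColumns cols r →
    ∀ k, cols.flatten.count (r + k) = (rowLengths (cols.map length)).getD k 0
  | [], _, _, k => by simp [rowLengths]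
  | _ :: cs, r, ⟨d, rfl, hcs⟩, k => by
    rw [flatten_cons, count_append, count_add_reverse_range', map_cons, length_reverse,
      length_range', rowLengths_succ_cons_getD]
    rcases lt_trichotomy k d with hkd | rfl | hkd
    · rw [if_pos (by omega), if_pos hkd,
        count_eq_zero.mpr fun h => by have := hcs.le_of_mem h; omega]
    · rw [if_pos (by omega), if_neg (lt_irrefl k), if_pos rfl, ← hcs.count_add 0, add_zero,
        add_comm]
    · rw [if_neg (by omega), if_neg hkd.not_gt, if_neg hkd.ne', zero_add,
        show r + k = r + d + (k - d) by omega, hcs.count_add]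

end IsHWColumns

structure IsQRColumns (cols : List (List ℕ)) : Prop where
  ne_nil : ∀ c ∈ cols, c ≠ []
  sortedGT : ∀ c ∈ cols, c.SortedGT
  pairwise_le : cols.Pairwise fun c d => ∀ x ∈ c, ∀ y ∈ d, x ≤ y

theorem isQRColumns_decFactors {w : List ℕ} (hw : IsQRWord w) : IsQRColumns (decFactors w) := by
  have hcols := ne_nil_and_sortedGT_of_mem_decFactors w
  refine ⟨fun c hc => (hcols c hc).1, fun c hc => (hcols c hc).2, ?_⟩
  have hsorted : ((decFactors w).map reverse).flatten.IsChain (· ≤ ·) := by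
    rw [isChain_flatten (by simpa using fun h => (hcols [] h).1 rfl), isChain_map]
    refine ⟨fun c hc => ?_, hw.imp fun a b hab x hx y hy => ?_⟩
    · obtain ⟨d, hd, rfl⟩ := mem_map.mp hc
      exact (hcols d hd).2.reverse.sortedLE.isChain
    · simp only [getLast?_reverse, head?_reverse, Option.mem_def] at hx hy
      simpa [headD_eq_head?_getD, getLastD_eq_getLast?, hx, hy] using hab
  simpa [pairwise_map] using (pairwise_flatten.mp (isChain_iff_pairwise.mp hsorted)).2

namespace IsQRColumns

variable {c : List ℕ} {cs cols : List (List ℕ)} {r : ℕ}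

theorem of_cons (h : IsQRColumns (c :: cs)) : IsQRColumns cs :=
  ⟨fun d hd => h.ne_nil d (mem_cons_of_mem c hd), fun d hd => h.sortedGT d (mem_cons_of_mem c hd),
    h.pairwise_le.of_cons⟩

theorem length_pos (h : IsQRColumns cols) (hc : c ∈ cols) : 0 < c.length :=
  length_pos_of_ne_nil (h.ne_nil c hc)

theorem le_of_mem_flatten (h : IsQRColumns (c :: cs)) {x y : ℕ} (hx : x ∈ c)
    (hy : y ∈ cs.flatten) : x ≤ y := by
  obtain ⟨d, hd, hyd⟩ := mem_flatten.mp hy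
  exact rel_of_pairwise_cons h.pairwise_le hd x hx y hyd

theorem pair_sublist_flatten_iff (h : IsQRColumns cols) {i : ℕ} :
    [i + 1, i] <+ cols.flatten ↔ ∃ c ∈ cols, i + 1 ∈ c ∧ i ∈ c := by
  induction cols with
  | nil => simp
  | cons c cs ih =>
    rw [flatten_cons, sublist_append_iff, exists_mem_cons_iff,
      ← (h.sortedGT c mem_cons_self).pair_sublist_iff (Nat.lt_succ_self i), ← ih h.of_cons]
    constructor
    · rintro ⟨l₁, l₂, hl, h₁, h₂⟩
      rcases l₁ with _ | ⟨a, _ | ⟨b, _ | _⟩⟩ <;>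
        simp only [nil_append, cons_append, cons.injEq] at hl
      · exact Or.inr (hl ▸ h₂)
      · obtain ⟨rfl, rfl⟩ := hl
        have := h.le_of_mem_flatten (singleton_sublist.mp h₁) (singleton_sublist.mp h₂)
        omega
      · obtain ⟨rfl, rfl, _⟩ := hl
        exact Or.inl h₁
      · simp at hl
    · rintro (hc | hcs)
      · exact ⟨_, [], by simp, hc, nil_sublist _⟩
      · exact ⟨[], _, rfl, nil_sublist _, hcs⟩

theorem isHWColumns_of_exists_mem_mem (h : IsQRColumns cols) (hr : ∀ x ∈ cols.flatten, r ≤ x)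
    (hcl : ∀ i, r ≤ i → i + 1 ∈ cols.flatten → ∃ c ∈ cols, i + 1 ∈ c ∧ i ∈ c) :
    IsHWColumns cols r := by
  induction cols generalizing r with
  | nil => trivial
  | cons c cs ih =>
    have hrc : ∀ x ∈ c, r ≤ x := fun x hx => hr x (mem_append_left _ hx)
    have hpred : ∀ i, r ≤ i → i + 1 ∈ c → i ∈ c := by
      intro i hri hi
      obtain ⟨c', hc', -, hi₀⟩ := hcl i hri (mem_append_left _ hi)
      rcases mem_cons.mp hc' with rfl | hc'
      · exact hi₀
      · have := h.le_of_mem_flatten hi (mem_flatten_of_mem hc' hi₀); omega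
    obtain ⟨d, hd⟩ := Nat.exists_eq_add_one.mpr (h.length_pos mem_cons_self)
    have hc : c = (range' r (d + 1)).reverse :=
      hd ▸ (h.sortedGT c mem_cons_self).eq_reverse_range' fun x hx =>
        ⟨hrc x hx, lt_add_length_of_pred_mem (hrc x hx) hx hpred⟩
    have hmem : ∀ x, x ∈ c ↔ r ≤ x ∧ x ≤ r + d := by
      intro x; rw [hc]; simp only [mem_reverse, mem_range'_1]; omega
    refine ⟨d, hc, ih h.of_cons
      (fun x hx => h.le_of_mem_flatten ((hmem _).2 ⟨by omega, le_rfl⟩) hx) fun i hri hi => ?_⟩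
    obtain ⟨c', hc', hi₁, hi₀⟩ := hcl i (by omega) (mem_append_right _ hi)
    rcases mem_cons.mp hc' with rfl | hc'
    · have := ((hmem _).1 hi₁).2; omega
    · exact ⟨c', hc', hi₁, hi₀⟩

theorem isHWColumns_iff_exists_mem_mem (h : IsQRColumns cols)
    (hr : ∀ x ∈ cols.flatten, r ≤ x) : IsHWColumns cols r ↔
      ∀ i, r ≤ i → i + 1 ∈ cols.flatten → ∃ c ∈ cols, i + 1 ∈ c ∧ i ∈ c :=
  ⟨IsHWColumns.exists_mem_mem, h.isHWColumns_of_exists_mem_mem hr⟩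

theorem le_add_of_count (h : IsQRColumns (c :: cs)) {d : ℕ} (hd : c.length = d + 1)
    (hcount : ∀ k, (c :: cs).flatten.count (r + k) =
      (rowLengths ((c :: cs).map length)).getD k 0) {x : ℕ} (hx : x ∈ c) : x ≤ r + d := by
  have hcount' : ∀ k, c.count (r + k) + cs.flatten.count (r + k) =
      if k < d then 1
      else if k = d then (rowLengths (cs.map length)).getD 0 0 + 1
      else (rowLengths (cs.map length)).getD (k - d) 0 := by
    intro k
    rw [← count_append, ← flatten_cons, hcount, map_cons, hd, rowLengths_succ_cons_getD]
  by_contra! hlt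
  -- Then `r + d` occurs only in `c`, hence at most once, whereas the shape asks for one more
  -- occurrence than the length of the first row of `cs`; if `cs = []`, `x` should not occur.
  have hcs : cs.flatten.count (r + d) = 0 :=
    count_eq_zero.mpr fun hm => by have := h.le_of_mem_flatten hx hm; omega
  have hd₀ := hcount' d
  rw [if_neg (lt_irrefl d), if_pos rfl, hcs] at hd₀
  have hd₁ : c.count (r + d) ≤ 1 := by
    rw [(h.sortedGT c mem_cons_self).nodup.count]
    split_ifs <;> omega
  rcases cs with _ | ⟨e, es⟩
  · have hx₀ := hcount' (x - r)
    rw [if_neg (by omega), if_neg (by omega), show r + (x - r) = x by omega] at hx₀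
    have := count_pos_iff.mpr hx
    simp [rowLengths] at hx₀
    omega
  · have := rowLengths_cons_getD_zero_pos (h.length_pos (mem_cons_of_mem c mem_cons_self))
      (es.map length)
    simp only [map_cons] at hd₀
    omega

theorem isHWColumns_of_count (h : IsQRColumns cols) (hr : ∀ x ∈ cols.flatten, r ≤ x)
    (hcount : ∀ k, cols.flatten.count (r + k) = (rowLengths (cols.map length)).getD k 0) :
    IsHWColumns cols r := by
  induction cols generalizing r with
  | nil => trivial
  | cons c cs ih =>
    obtain ⟨d, hd⟩ := Nat.exists_eq_add_one.mpr (h.length_pos mem_cons_self)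
    have hc : c = (range' r (d + 1)).reverse :=
      hd ▸ (h.sortedGT c mem_cons_self).eq_reverse_range' fun x hx =>
        ⟨hr x (mem_append_left _ hx), by have := h.le_add_of_count hd hcount hx; omega⟩
    refine ⟨d, hc, ih h.of_cons (fun x hx => ?_) fun k => ?_⟩
    · exact h.le_of_mem_flatten (by rw [hc]; simp) hx
    · have hk := hcount (d + k)
      rw [flatten_cons, count_append, map_cons, hd, rowLengths_succ_cons_getD, hc,
        count_add_reverse_range', ← add_assoc] at hk
      rcases k with _ | k
      · simp at hk ⊢; omega
      · simp [show ¬ d + (k + 1) < d by omega] at hk ⊢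
        omega

theorem isHWColumns_iff_count (h : IsQRColumns cols) (hr : ∀ x ∈ cols.flatten, r ≤ x) :
    IsHWColumns cols r ↔
      ∀ k, cols.flatten.count (r + k) = (rowLengths (cols.map length)).getD k 0 :=
  ⟨IsHWColumns.count_add, h.isHWColumns_of_count hr⟩

end IsQRColumns

theorem highestWeight_iff_weight_eq_shape_general (n : ℕ) (α : List ℕ)
    (w : List ℕ) (hword : IsWord n w) (hq : IsQRWord w)
    (hs : shape w = α) :
    HighestWeight n w ↔ (∀ j, 1 ≤ j → w.count j = α.getD (j - 1) 0) := by
  have hcols := isQRColumns_decFactors hq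
  have hpos : ∀ x ∈ (decFactors w).flatten, 1 ≤ x := by
    rw [flatten_decFactors]
    exact fun x hx => (hword x hx).1
  calc HighestWeight n w
      ↔ ∀ i, 1 ≤ i → i + 1 ∈ w → [i + 1, i] <+ w := highestWeight_iff_of_isWord hword
    _ ↔ IsHWColumns (decFactors w) 1 := by
      rw [hcols.isHWColumns_iff_exists_mem_mem hpos]
      simp only [← hcols.pair_sublist_flatten_iff, flatten_decFactors]
    _ ↔ ∀ k, w.count (1 + k) = α.getD k 0 := by
      rw [hcols.isHWColumns_iff_count hpos, flatten_decFactors, ← hs]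
      rfl
    _ ↔ ∀ j, 1 ≤ j → w.count j = α.getD (j - 1) 0 :=
      ⟨fun h j hj => by simpa [Nat.add_sub_cancel' hj] using h (j - 1),
        fun h k => by simpa using h (1 + k) (by omega)⟩

/-- Let `α` be a composition and `w ∈ 𝒜_n^*` a quasi-ribbon word of
shape `α`. Then `w` is a highest-weight word if and only if `wt(w) = α`, i.e. the
number of occurrences of the letter `j` in `w` is `α_j` for `j ≤ ℓ(α)` and `0` for
`j > ℓ(α)`. -/
theorem highestWeight_iff_weight_eq_shape (n : ℕ) (α : List ℕ)
    (hpos : ∀ a ∈ α, 0 < a) (w : List ℕ) (hword : IsWord n w) (hq : IsQRWord w)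
    (hs : shape w = α) :
    HighestWeight n w ↔ (∀ j, 1 ≤ j → w.count j = α.getD (j - 1) 0) :=
  highestWeight_iff_weight_eq_shape_general n α w hword hq hs

end HypoCrystal
end
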